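/- arXiv:2105.06074 — 4 statements merged into one kernel-verified Lean document; each statement's English description precedes it below -/
import Mathlib

section
/- The character polynomial is a local invariant: if U, V ∈ SU(4) and there exist single-qubit unitaries A₁, A₂, B₁, B₂ ∈ SU(2) with U = (A₁ ⊗ A₂) V (B₁ ⊗ B₂), then F_U(t) = F_V(t) for all real t, where F_U(t) = det(Re(M†UM) + t·Im(M†UM)) and M is the magic basis change matrix. -/
open Complex Matrix

/-- Kronecker product of two 2×2 matrices as a 4×4 matrix, basis order |00⟩,|01⟩,|10⟩,|11⟩. -/
def kron (A B : Matrix (Fin 2) (Fin 2) ℂ) : Matrix (Fin 4) (Fin 4) ℂ :=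
  !![A 0 0 * B 0 0, A 0 0 * B 0 1, A 0 1 * B 0 0, A 0 1 * B 0 1;
     A 0 0 * B 1 0, A 0 0 * B 1 1, A 0 1 * B 1 0, A 0 1 * B 1 1;
     A 1 0 * B 0 0, A 1 0 * B 0 1, A 1 1 * B 0 0, A 1 1 * B 0 1;
     A 1 0 * B 1 0, A 1 0 * B 1 1, A 1 1 * B 1 0, A 1 1 * B 1 1]

/-- The magic basis change matrix. -/
noncomputable def magicM : Matrix (Fin 4) (Fin 4) ℂ :=
  ((1 : ℂ) / Real.sqrt 2) •
  !![1, 0, 0, I;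
     0, I, 1, 0;
     0, I, -1, 0;
     1, 0, 0, -I]

/-- The character polynomial F_U(t) = det(Re(M†UM) + t·Im(M†UM)). -/
noncomputable def charPoly (U : Matrix (Fin 4) (Fin 4) ℂ) (t : ℝ) : ℝ :=
  (((magicMᴴ * U * magicM).map Complex.re) + t • ((magicMᴴ * U * magicM).map Complex.im)).det

/-! For `A, B ∈ SU(2)` one has `conj A = σ_y A σ_y`, and `Σ = σ_y ⊗ σ_y` maps `conj M`
to `-M`; hence entrywise conjugation fixes `M†(A ⊗ B)M`, a real matrix of determinant 1.
The map `z ↦ re z + t im z` is `ℝ`-linear, so it commutes with multiplication by real matrices: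
the real pencil of `U = (A₁ ⊗ A₂) V (B₁ ⊗ B₂)` is `P · (pencil of V) · Q`, with
`det P = det Q = 1`. -/

open scoped ComplexConjugate

section RealLinearMap

variable {l m n : Type*} [Fintype m]

lemma map_ofReal_mul_map (f : ℂ →ₗ[ℝ] ℝ) (R : Matrix l m ℝ) (X : Matrix m n ℂ) :
    (R.map ofReal * X).map f = R * X.map f := by
  ext i j
  simp [mul_apply, map_sum, ← real_smul]

lemma mul_map_ofReal_map (f : ℂ →ₗ[ℝ] ℝ) (X : Matrix l m ℂ) (R : Matrix m n ℝ) :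
    (X * R.map ofReal).map f = X.map f * R := by
  ext i j
  simp [mul_apply, map_sum, mul_comm _ (ofReal _), ← real_smul, mul_comm (f _)]

end RealLinearMap

lemma eq_map_ofReal_of_map_conj_eq {m n : Type*} {X : Matrix m n ℂ} (hX : X.map conj = X) :
    X = (X.map re).map ofReal := by
  ext i j
  exact (conj_eq_iff_re.mp (congrFun (congrFun hX i) j)).symm

lemma det_map_ofReal {n : Type*} [Fintype n] [DecidableEq n] (R : Matrix n n ℝ) :
    (R.map ofReal).det = R.det :=
  (RingHom.map_det ofRealHom R).symm

lemma map_conj_conjTranspose_mul_mul_eq_self {m n : Type*} [Fintype m] (M : Matrix m n ℂ)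
    (K S : Matrix m m ℂ) (hK : K.map conj = S * K * S) (hS : Sᴴ = S)
    (hSM : S * M.map conj = -M) :
    (Mᴴ * K * M).map conj = Mᴴ * K * M := by
  calc (Mᴴ * K * M).map conj = (M.map conj)ᴴ * (S * K * S) * M.map conj := by
        rw [Matrix.map_mul, Matrix.map_mul, hK,
          conjTranspose_map (conj : ℂ → ℂ) (fun _ => rfl)]
    _ = (S * M.map conj)ᴴ * K * (S * M.map conj) := by
        simp only [conjTranspose_mul, hS, Matrix.mul_assoc]
    _ = Mᴴ * K * M := by
        rw [hSM, conjTranspose_neg, Matrix.neg_mul, Matrix.neg_mul, Matrix.mul_neg, neg_neg]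

lemma kron_mul (A B C D : Matrix (Fin 2) (Fin 2) ℂ) :
    kron (A * C) (B * D) = kron A B * kron C D := by
  ext i j
  fin_cases i <;> fin_cases j <;> simp [kron, mul_apply, Fin.sum_univ_succ] <;> ring

lemma kron_map_conj (A B : Matrix (Fin 2) (Fin 2) ℂ) :
    (kron A B).map conj = kron (A.map conj) (B.map conj) := by
  ext i j
  fin_cases i <;> fin_cases j <;> simp [kron]

lemma det_kron (A B : Matrix (Fin 2) (Fin 2) ℂ) :
    (kron A B).det = A.det ^ 2 * B.det ^ 2 := by
  simp [kron, det_succ_row_zero, Fin.sum_univ_succ, Fin.succAbove, submatrix_apply,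
    show Fin.castSucc (2 : Fin 3) = (2 : Fin 4) from rfl]
  ring

lemma magicM_conjTranspose_mul_self : magicMᴴ * magicM = 1 := by
  have h2 : ((Real.sqrt 2 : ℂ)) ^ 2 = 2 := by
    rw [← ofReal_pow, Real.sq_sqrt (by norm_num)]; norm_num
  ext i j
  fin_cases i <;> fin_cases j <;>
    simp [magicM, mul_apply, Fin.sum_univ_four, conjTranspose_apply, one_apply] <;>
    field_simp <;> simp [h2] <;> norm_num

lemma magicM_mul_conjTranspose_self : magicM * magicMᴴ = 1 :=
  mul_eq_one_comm.mp magicM_conjTranspose_mul_self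

def pauliY : Matrix (Fin 2) (Fin 2) ℂ := !![0, -I; I, 0]

lemma map_conj_eq_pauliY_mul_mul_pauliY (A : Matrix (Fin 2) (Fin 2) ℂ) (hA : Aᴴ * A = 1)
    (hAdet : A.det = 1) : A.map conj = pauliY * A * pauliY := by
  have hadj : Aᴴ = A.adjugate := by
    rw [← inv_eq_left_inv hA, Matrix.inv_def, hAdet, Ring.inverse_one, one_smul]
  rw [adjugate_fin_two] at hadj
  have h11 : A 1 1 = conj (A 0 0) := by
    simpa [conjTranspose_apply] using (congrFun (congrFun hadj 0) 0).symm
  have h10 : A 1 0 = -conj (A 0 1) := by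
    simpa [conjTranspose_apply] using congrArg Neg.neg (congrFun (congrFun hadj 1) 0).symm
  ext i j
  fin_cases i <;> fin_cases j <;>
    simp [pauliY, mul_apply, vecMul, dotProduct, Fin.sum_univ_two, h11, h10] <;>
    ring_nf <;> simp [I_sq]

lemma kron_pauliY_conjTranspose : (kron pauliY pauliY)ᴴ = kron pauliY pauliY := by
  ext i j
  fin_cases i <;> fin_cases j <;> simp [kron, pauliY, conjTranspose_apply]

lemma kron_pauliY_mul_map_conj_magicM : kron pauliY pauliY * magicM.map conj = -magicM := by
  ext i j
  fin_cases i <;> fin_cases j <;> simp [kron, pauliY, magicM, mul_apply, Fin.sum_univ_four]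

lemma exists_map_ofReal_eq_magic_conj_kron (A B : Matrix (Fin 2) (Fin 2) ℂ)
    (hA : Aᴴ * A = 1) (hAdet : A.det = 1) (hB : Bᴴ * B = 1) (hBdet : B.det = 1) :
    ∃ R : Matrix (Fin 4) (Fin 4) ℝ,
      R.det = 1 ∧ magicMᴴ * kron A B * magicM = R.map ofReal := by
  set X := magicMᴴ * kron A B * magicM
  have hconj : X.map conj = X := by
    refine map_conj_conjTranspose_mul_mul_eq_self magicM (kron A B) (kron pauliY pauliY) ?_
      kron_pauliY_conjTranspose kron_pauliY_mul_map_conj_magicM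
    rw [kron_map_conj, map_conj_eq_pauliY_mul_mul_pauliY A hA hAdet,
      map_conj_eq_pauliY_mul_mul_pauliY B hB hBdet, ← kron_mul, ← kron_mul]
  have hdet : X.det = 1 := by
    rw [det_mul, det_mul, det_kron, hAdet, hBdet, one_pow, one_mul, mul_one, ← det_mul,
      magicM_conjTranspose_mul_self, det_one]
  refine ⟨X.map re, ?_, eq_map_ofReal_of_map_conj_eq hconj⟩
  have h := det_map_ofReal (X.map re)
  rw [← eq_map_ofReal_of_map_conj_eq hconj, hdet] at h
  exact_mod_cast h.symm

lemma charPoly_eq_det_map (U : Matrix (Fin 4) (Fin 4) ℂ) (t : ℝ) :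
    charPoly U t = ((magicMᴴ * U * magicM).map (reLm + t • imLm)).det := by
  unfold charPoly
  congr 1

theorem charPoly_local_invariant_general
    (U V : Matrix (Fin 4) (Fin 4) ℂ)
    (A₁ A₂ B₁ B₂ : Matrix (Fin 2) (Fin 2) ℂ)
    (hA₁ : A₁ᴴ * A₁ = 1) (hA₁det : A₁.det = 1)
    (hA₂ : A₂ᴴ * A₂ = 1) (hA₂det : A₂.det = 1)
    (hB₁ : B₁ᴴ * B₁ = 1) (hB₁det : B₁.det = 1)
    (hB₂ : B₂ᴴ * B₂ = 1) (hB₂det : B₂.det = 1)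
    (h : U = kron A₁ A₂ * V * kron B₁ B₂) :
    ∀ t : ℝ, charPoly U t = charPoly V t := by
  intro t
  obtain ⟨P, hPdet, hP⟩ :=
    exists_map_ofReal_eq_magic_conj_kron A₁ A₂ hA₁ hA₁det hA₂ hA₂det
  obtain ⟨Q, hQdet, hQ⟩ :=
    exists_map_ofReal_eq_magic_conj_kron B₁ B₂ hB₁ hB₁det hB₂ hB₂det
  have hmagic : magicMᴴ * U * magicM
      = P.map ofReal * (magicMᴴ * V * magicM) * Q.map ofReal := by
    rw [← hP, ← hQ, h]
    simp only [Matrix.mul_assoc, ← Matrix.mul_assoc magicM magicMᴴ,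
      magicM_mul_conjTranspose_self, Matrix.one_mul]
  rw [charPoly_eq_det_map, charPoly_eq_det_map, hmagic, mul_map_ofReal_map, map_ofReal_mul_map,
    det_mul, det_mul, hPdet, hQdet, one_mul, mul_one]

theorem charPoly_local_invariant
    (U V : Matrix (Fin 4) (Fin 4) ℂ)
    (A₁ A₂ B₁ B₂ : Matrix (Fin 2) (Fin 2) ℂ)
    (hU : Uᴴ * U = 1) (hUdet : U.det = 1)
    (hV : Vᴴ * V = 1) (hVdet : V.det = 1)
    (hA₁ : A₁ᴴ * A₁ = 1) (hA₁det : A₁.det = 1)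
    (hA₂ : A₂ᴴ * A₂ = 1) (hA₂det : A₂.det = 1)
    (hB₁ : B₁ᴴ * B₁ = 1) (hB₁det : B₁.det = 1)
    (hB₂ : B₂ᴴ * B₂ = 1) (hB₂det : B₂.det = 1)
    (h : U = kron A₁ A₂ * V * kron B₁ B₂) :
    ∀ t : ℝ, charPoly U t = charPoly V t :=
  charPoly_local_invariant_general U V A₁ A₂ B₁ B₂ hA₁ hA₁det hA₂ hA₂det hB₁ hB₁det hB₂ hB₂det h
end

section
/- In a multigraph with edge weights in which an edge e = {C,D} is called 'useful with respect to vertices A, B' if from both endpoints of e there exist strictly-increasing-weight paths starting with e and ending at A or B, and the graph is called 'good' if every pair of vertices A, B is connected by a path of edges useful with respect to A, B: in a good simple graph (no parallel edges) with at least 3 vertices, there is at most one vertex of degree 1. -/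
/-!
Let `x ≠ y` be leaves with neighbours `x'`, `y'`. If `x` and `y` are adjacent, `{x, y}` is closed
under adjacency, so by goodness it is the whole graph, contradicting the third vertex. Otherwise
the edge `x x'` lies on every `x`–`y` path, hence is useful: an increasing path leaves `x` along
it and cannot return to `x` (it would have to come back along the same, lighter edge), so it ends
at `y` through `y' y`, giving `w x x' < w y' y`. Symmetrically `w y y' < w x' x`, a contradiction.
-/

variable {V : Type}

/-- The list of weights of consecutive edges along a list of vertices. -/
def wlist (w : V → V → ℝ) : List V → List ℝ
  | a :: b :: l => w a b :: wlist w (b :: l)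
  | _ => []

/-- A walk along a list of vertices with strictly increasing edge weights. -/
def IncPath (G : SimpleGraph V) (w : V → V → ℝ) (l : List V) : Prop :=
  List.Chain' G.Adj l ∧ List.Chain' (· < ·) (wlist w l)

/-- The edge C–D is useful with respect to the vertices A and B: in both directions there
is a strictly-increasing-weight path starting with the edge and ending at A or B. -/
def Useful (G : SimpleGraph V) (w : V → V → ℝ) (A B C D : V) : Prop :=
  (∃ l : List V, IncPath G w (C :: D :: l) ∧
      (C :: D :: l).getLast (by simp) ∈ ({A, B} : Set V)) ∧
  (∃ l : List V, IncPath G w (D :: C :: l) ∧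
      (D :: C :: l).getLast (by simp) ∈ ({A, B} : Set V))

/-- A graph is good if every pair of distinct vertices is joined by a path consisting
entirely of edges useful with respect to that pair. -/
def GoodGraph (G : SimpleGraph V) (w : V → V → ℝ) : Prop :=
  ∀ A B : V, A ≠ B → ∃ l : List V,
    List.Chain' G.Adj (A :: l) ∧ (A :: l).getLast (by simp) = B ∧
    ∀ p ∈ (A :: l).zip l, Useful G w A B p.1 p.2

variable {G : SimpleGraph V} {w : V → V → ℝ}

lemma incPath_cons_cons_cons_iff {a b c : V} {l : List V} :
    IncPath G w (a :: b :: c :: l) ↔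
      G.Adj a b ∧ w a b < w b c ∧ IncPath G w (b :: c :: l) := by
  change List.IsChain _ _ ∧ List.IsChain _ _ ↔ _ ∧ _ ∧ List.IsChain _ _ ∧ List.IsChain _ _
  simp only [wlist, List.isChain_cons_cons]
  tauto

lemma IncPath.exists_adj_getLast_weight_lt {a b c : V} {l : List V}
    (h : IncPath G w (a :: b :: c :: l)) :
    ∃ u, G.Adj u ((a :: b :: c :: l).getLast (by simp)) ∧
      w a b < w u ((a :: b :: c :: l).getLast (by simp)) := by
  induction l generalizing a b c with
  | nil =>
    obtain ⟨-, hlt, hbc, -⟩ := incPath_cons_cons_cons_iff.1 h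
    exact ⟨b, List.isChain_cons_cons.1 hbc |>.1, hlt⟩
  | cons d l ih =>
    obtain ⟨-, hlt, h⟩ := incPath_cons_cons_cons_iff.1 h
    obtain ⟨u, hu, hlt'⟩ := ih h
    exact ⟨u, hu, hlt.trans hlt'⟩

lemma weight_lt_of_incPath_between_leaves (hsymm : ∀ a b, w a b = w b a)
    {x x' y y' : V} (hx : ∀ v, G.Adj x v ↔ v = x') (hy : ∀ v, G.Adj y v ↔ v = y')
    (hxy : ¬G.Adj x y) {m : List V} (hm : IncPath G w (x :: x' :: m))
    (hlast : (x :: x' :: m).getLast (by simp) ∈ ({x, y} : Set V)) :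
    w x x' < w y' y := by
  have hxx' : G.Adj x x' := (hx x').2 rfl
  obtain _ | ⟨c, m⟩ := m
  · exfalso
    rcases hlast with h | h <;> simp only [List.getLast_cons_cons, List.getLast_singleton] at h
    · exact G.ne_of_adj hxx' h.symm
    · exact hxy (h ▸ hxx')
  obtain ⟨u, hu, hlt⟩ := hm.exists_adj_getLast_weight_lt
  rcases hlast with h | h
  · rw [h] at hu hlt
    rw [(hx u).1 hu.symm, hsymm x'] at hlt
    exact absurd hlt (lt_irrefl _)
  · rw [h] at hu hlt
    rwa [(hy u).1 hu.symm] at hlt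

lemma GoodGraph.useful_of_adj_iff_eq (hgood : GoodGraph G w) {A B A' : V} (hAB : A ≠ B)
    (hA : ∀ v, G.Adj A v ↔ v = A') : Useful G w A B A A' := by
  obtain ⟨l, hchain, hlast, huseful⟩ := hgood A B hAB
  obtain _ | ⟨b, l⟩ := l
  · exact absurd hlast hAB
  obtain rfl : b = A' := (hA b).1 (List.isChain_cons_cons.1 hchain).1
  exact huseful (A, b) (by simp)

lemma GoodGraph.mem_of_adj_closed (hgood : GoodGraph G w) {S : Set V}
    (hS : ∀ ⦃u v⦄, G.Adj u v → u ∈ S → v ∈ S) {a : V} (ha : a ∈ S) (b : V) : b ∈ S := by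
  obtain rfl | hab := eq_or_ne a b
  · exact ha
  obtain ⟨l, hchain, hlast, -⟩ := hgood a b hab
  rw [← hlast]
  exact List.IsChain.induction S (a :: l) hchain hS (fun _ => ha) _ (List.getLast_mem _)

lemma GoodGraph.eq_or_eq_of_adj_iff_eq (hgood : GoodGraph G w) {x y : V}
    (hx : ∀ v, G.Adj x v ↔ v = y) (hy : ∀ v, G.Adj y v ↔ v = x) (z : V) : z = x ∨ z = y := by
  have hclosed : ∀ ⦃u v⦄, G.Adj u v → u ∈ ({x, y} : Set V) → v ∈ ({x, y} : Set V) := by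
    rintro u v huv (rfl | rfl)
    exacts [.inr ((hx v).1 huv), .inl ((hy v).1 huv)]
  exact hgood.mem_of_adj_closed hclosed (Set.mem_insert x {y}) z

lemma SimpleGraph.exists_adj_iff_eq_of_degree_eq_one {x : V} [Fintype (G.neighborSet x)]
    (hx : G.degree x = 1) : ∃ x', ∀ v, G.Adj x v ↔ v = x' := by
  obtain ⟨x', hxx', huniq⟩ := SimpleGraph.degree_eq_one_iff_existsUnique_adj.1 hx
  exact ⟨x', fun v => ⟨huniq v, fun h => h ▸ hxx'⟩⟩

theorem good_graph_at_most_one_degree_one_vertex_general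
    [Fintype V] (G : SimpleGraph V) [DecidableRel G.Adj] (w : V → V → ℝ)
    (hsymm : ∀ a b, w a b = w b a)
    (hcard : 3 ≤ Fintype.card V)
    (hgood : GoodGraph G w) :
    ∀ x y : V, G.degree x = 1 → G.degree y = 1 → x = y := by
  intro x y hdx hdy
  by_contra hne
  obtain ⟨x', hx⟩ := G.exists_adj_iff_eq_of_degree_eq_one hdx
  obtain ⟨y', hy⟩ := G.exists_adj_iff_eq_of_degree_eq_one hdy
  by_cases hxy : G.Adj x y
  · classical
    obtain rfl := (hx y).1 hxy
    obtain rfl := (hy x).1 hxy.symm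
    obtain ⟨z, -, hz⟩ := Finset.exists_mem_notMem_of_card_lt_card
      (s := {x, y}) (t := Finset.univ) (by grind [Finset.card_le_two, Finset.card_univ])
    exact hz (by simpa using hgood.eq_or_eq_of_adj_iff_eq hx hy z)
  obtain ⟨m, hm, hmlast⟩ := (hgood.useful_of_adj_iff_eq hne hx).1
  obtain ⟨m', hm', hmlast'⟩ := (hgood.useful_of_adj_iff_eq (Ne.symm hne) hy).1
  have hlt := weight_lt_of_incPath_between_leaves hsymm hx hy hxy hm hmlast
  have hlt' := weight_lt_of_incPath_between_leaves hsymm hy hx (fun h => hxy h.symm) hm' hmlast'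
  linarith [hsymm x x', hsymm y y']

/-- In a good simple graph with at least 3 vertices and distinct edge weights, there is at
most one vertex of degree 1. -/
theorem good_graph_at_most_one_degree_one_vertex
    [Fintype V] (G : SimpleGraph V) [DecidableRel G.Adj] (w : V → V → ℝ)
    (hsymm : ∀ a b, w a b = w b a)
    (hdist : ∀ a b c d, G.Adj a b → G.Adj c d → w a b = w c d →
      (a = c ∧ b = d) ∨ (a = d ∧ b = c))
    (hcard : 3 ≤ Fintype.card V)
    (hgood : GoodGraph G w) :
    ∀ x y : V, G.degree x = 1 → G.degree y = 1 → x = y :=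
  good_graph_at_most_one_degree_one_vertex_general G w hsymm hcard hgood
end

section
/- In a good simple graph (no parallel edges) whose vertices of degree 2 induce no cycle, every 'chain' (connected component of the subgraph induced by degree-2 vertices, forming a path) has at most 4 vertices. -/
variable {V : Type}

/-!
Let `p₀ – ⋯ – p₄` be the chain, `q` the outer neighbour of `p₀` and `r` that of `p₄`. An
increasing walk that enters a vertex of degree 2 must leave it by its other edge, and one that
leaves the chain at one end can only come back in at the other end, so increasing walks from the
chain run around the closed route `p₀ → ⋯ → p₄ → r ⇝ q → p₀` in one direction. Applied to the
useful edges at both ends of good paths between `p₀` and `p₂` and between `p₂` and `p₄`, this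
forces the weights to increase all the way around `p₂ → p₃ → p₄ → r ⇝ q → p₀ → p₁ → p₂` or all
the way around its reverse; in either case the good path between `p₁` and `p₃` has no useful
first or last edge. Acyclicity among the degree-2 vertices keeps `p₀` and `p₄` non-adjacent.
-/
section IncreasingPaths

variable {G : SimpleGraph V} {w : V → V → ℝ}

/-- `Useful G w A B C D` unfolds to `IncReach G w {A, B} C D ∧ IncReach G w {A, B} D C`. -/
def IncReach (G : SimpleGraph V) (w : V → V → ℝ) (T : Set V) (x y : V) : Prop :=
  ∃ l : List V, IncPath G w (x :: y :: l) ∧ (x :: y :: l).getLast (by simp) ∈ T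

theorem IncPath.of_cons_cons_cons {x y z : V} {l : List V}
    (h : IncPath G w (x :: y :: z :: l)) :
    G.Adj y z ∧ w x y < w y z ∧ IncPath G w (y :: z :: l) := by
  obtain ⟨hadj, hinc⟩ := h
  change List.IsChain G.Adj (x :: y :: z :: l) at hadj
  change List.IsChain (· < ·) (w x y :: w y z :: wlist w (z :: l)) at hinc
  rw [List.isChain_cons_cons] at hadj hinc
  exact ⟨(List.isChain_cons_cons.mp hadj.2).1, hinc.1, hadj.2, hinc.2⟩

theorem IncReach.step {T : Set V} {x y : V} (h : IncReach G w T x y) (hy : y ∉ T) :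
    ∃ z, G.Adj y z ∧ w x y < w y z ∧ IncReach G w T y z := by
  obtain ⟨_ | ⟨z, l⟩, hl, hlast⟩ := h
  · exact absurd hlast hy
  · obtain ⟨hyz, hlt, hl'⟩ := hl.of_cons_cons_cons
    exact ⟨z, hyz, hlt, l, hl', by simpa using hlast⟩

/-- Turning back along `y → x` would repeat the weight `w x y`. -/
theorem IncReach.next (hsymm : ∀ a b, w a b = w b a) {T : Set V} {x y z : V}
    (h : IncReach G w T x y) (hy : y ∉ T) (hN : ∀ u, G.Adj y u → u = x ∨ u = z) :
    w x y < w y z ∧ IncReach G w T y z := by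
  obtain ⟨u, hyu, hlt, hu⟩ := h.step hy
  rcases hN u hyu with rfl | rfl
  · exact absurd (hsymm y u ▸ hlt) (lt_irrefl _)
  · exact ⟨hlt, hu⟩

theorem IncReach.exists_entry {S T : Set V} (hT : T ⊆ S) {x y : V} (h : IncReach G w T x y)
    (hy : y ∉ S) : ∃ u v, u ∉ S ∧ v ∈ S ∧ G.Adj u v ∧ w x y < w u v ∧ IncReach G w T u v := by
  obtain ⟨l, hl, hlast⟩ := h
  induction l generalizing x y with
  | nil => exact absurd (hT hlast) hy
  | cons z l ih =>
    obtain ⟨hyz, hlt, hl'⟩ := hl.of_cons_cons_cons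
    have hlast' : (y :: z :: l).getLast (by simp) ∈ T := by simpa using hlast
    by_cases hz : z ∈ S
    · exact ⟨y, z, hy, hz, hyz, hlt, l, hl', hlast'⟩
    · obtain ⟨u, v, hu, hv, huv, hlt', hreach⟩ := ih hz hl' hlast'
      exact ⟨u, v, hu, hv, huv, hlt.trans hlt', hreach⟩

/-- Coming back along `q → x` would repeat the weight `w x q`. -/
theorem IncReach.reenter (hsymm : ∀ a b, w a b = w b a) {S T : Set V} (hT : T ⊆ S)
    {x y q r : V} (hq : q ∉ S)
    (hS : ∀ u v, u ∉ S → v ∈ S → G.Adj u v → u = q ∧ v = x ∨ u = r ∧ v = y)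
    (h : IncReach G w T x q) : w x q < w r y ∧ IncReach G w T r y := by
  obtain ⟨u, v, hu, hv, huv, hlt, hreach⟩ := h.exists_entry hT hq
  rcases hS u v hu hv huv with ⟨rfl, rfl⟩ | ⟨rfl, rfl⟩
  · exact absurd (hsymm u v ▸ hlt) (lt_irrefl _)
  · exact ⟨hlt, hreach⟩

theorem GoodGraph.exists_adj_incReach (hgood : GoodGraph G w) {A B : V} (hAB : A ≠ B) :
    ∃ C, G.Adj A C ∧ IncReach G w {A, B} A C := by
  obtain ⟨_ | ⟨C, l⟩, hchain, hlast, huse⟩ := hgood A B hAB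
  · exact absurd hlast hAB
  · exact ⟨C, (List.isChain_cons_cons.mp hchain).1, (huse (A, C) (by simp)).1⟩

end IncreasingPaths

namespace SimpleGraph

variable {G : SimpleGraph V}

theorem exists_adj_ne_of_one_lt_degree {v : V} [Fintype (G.neighborSet v)]
    (hv : 1 < G.degree v) (x : V) : ∃ y, G.Adj v y ∧ y ≠ x := by
  obtain ⟨y, hy, hyx⟩ := Finset.exists_mem_ne (G.card_neighborFinset_eq_degree v ▸ hv) x
  exact ⟨y, (G.mem_neighborFinset v y).mp hy, hyx⟩

theorem eq_or_eq_of_degree_le_two {v x y z : V} [Fintype (G.neighborSet v)]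
    (hv : G.degree v ≤ 2) (hx : G.Adj v x) (hy : G.Adj v y) (hxy : x ≠ y) (hz : G.Adj v z) :
    z = x ∨ z = y := by
  classical
  have hsub : {x, y} ⊆ G.neighborFinset v := by simp [Finset.insert_subset_iff, hx, hy]
  have hN := Finset.eq_of_subset_of_card_le hsub
    (by rwa [card_neighborFinset_eq_degree, Finset.card_pair hxy])
  simpa [← hN] using (G.mem_neighborFinset v z).mpr hz

theorem IsAcyclic.not_adj_of_isPath (hG : G.IsAcyclic) {u v : V} {p : G.Walk u v}
    (hp : p.IsPath) (hlen : p.length ≠ 1) : ¬G.Adj u v := fun huv =>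
  hlen <| by
    simpa using congrArg (fun p : G.Path u v => p.1.length)
      ((hG.subsingleton_path u v).elim ⟨p, hp⟩ (Path.singleton huv))

theorem not_adj_of_isAcyclic_induce {S : Set V} (hS : (G.induce S).IsAcyclic) {p : Fin 5 → V}
    (hinj : Function.Injective p) (hpS : ∀ i, p i ∈ S)
    (hadj : ∀ i : Fin 4, G.Adj (p i.castSucc) (p i.succ)) : ¬G.Adj (p 0) (p 4) := by
  let u : Fin 5 → S := fun i => ⟨p i, hpS i⟩
  have hu : ∀ i : Fin 4, (G.induce S).Adj (u i.castSucc) (u i.succ) := hadj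
  let W : (G.induce S).Walk (u 0) (u 4) :=
    .cons (hu 0) (.cons (hu 1) (.cons (hu 2) (.cons (hu 3) .nil)))
  have hW : W.IsPath := Walk.IsPath.mk' <| show (List.ofFn u).Nodup from
    List.nodup_ofFn.mpr fun i j hij => hinj (congrArg Subtype.val hij)
  exact hS.not_adj_of_isPath hW (by simp [W])

end SimpleGraph

/-- `q – p₀ – p₁ – p₂ – p₃ – p₄ – r`, where `q` and `r` may coincide. -/
structure IsFiveChain (G : SimpleGraph V) (q p₀ p₁ p₂ p₃ p₄ r : V) : Prop where
  nodup : [p₀, p₁, p₂, p₃, p₄].Nodup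
  q_notMem : q ∉ ({p₀, p₁, p₂, p₃, p₄} : Set V)
  r_notMem : r ∉ ({p₀, p₁, p₂, p₃, p₄} : Set V)
  neighbors₀ : ∀ z, G.Adj p₀ z → z = q ∨ z = p₁
  neighbors₁ : ∀ z, G.Adj p₁ z → z = p₀ ∨ z = p₂
  neighbors₂ : ∀ z, G.Adj p₂ z → z = p₁ ∨ z = p₃
  neighbors₃ : ∀ z, G.Adj p₃ z → z = p₂ ∨ z = p₄
  neighbors₄ : ∀ z, G.Adj p₄ z → z = p₃ ∨ z = r

namespace IsFiveChain

variable {G : SimpleGraph V} {w : V → V → ℝ} {q p₀ p₁ p₂ p₃ p₄ r : V}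

theorem reverse (h : IsFiveChain G q p₀ p₁ p₂ p₃ p₄ r) : IsFiveChain G r p₄ p₃ p₂ p₁ p₀ q where
  nodup := List.nodup_reverse.mpr h.nodup
  q_notMem := by
    have := h.r_notMem
    simp only [Set.mem_insert_iff, Set.mem_singleton_iff] at this ⊢
    tauto
  r_notMem := by
    have := h.q_notMem
    simp only [Set.mem_insert_iff, Set.mem_singleton_iff] at this ⊢
    tauto
  neighbors₀ z hz := (h.neighbors₄ z hz).symm
  neighbors₁ z hz := (h.neighbors₃ z hz).symm
  neighbors₂ z hz := (h.neighbors₂ z hz).symm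
  neighbors₃ z hz := (h.neighbors₁ z hz).symm
  neighbors₄ z hz := (h.neighbors₀ z hz).symm

theorem reenter (h : IsFiveChain G q p₀ p₁ p₂ p₃ p₄ r) (hsymm : ∀ a b, w a b = w b a)
    {T : Set V} (hT : T ⊆ {p₀, p₁, p₂, p₃, p₄}) (hreach : IncReach G w T p₀ q) :
    w p₀ q < w r p₄ ∧ IncReach G w T r p₄ := by
  refine hreach.reenter hsymm hT h.q_notMem fun u v hu hv huv => ?_
  simp only [Set.mem_insert_iff, Set.mem_singleton_iff, not_or] at hu hv
  rcases hv with rfl | rfl | rfl | rfl | rfl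
  · have := h.neighbors₀ u huv.symm; tauto
  · have := h.neighbors₁ u huv.symm; tauto
  · have := h.neighbors₂ u huv.symm; tauto
  · have := h.neighbors₃ u huv.symm; tauto
  · have := h.neighbors₄ u huv.symm; tauto

variable (h : IsFiveChain G q p₀ p₁ p₂ p₃ p₄ r) (hsymm : ∀ a b, w a b = w b a)
include h hsymm

theorem weight_order_zero_two (hgood : GoodGraph G w) :
    w p₀ p₁ < w p₁ p₂ ∨ w p₀ q < w r p₄ ∧ w r p₄ < w p₄ p₃ ∧ w p₄ p₃ < w p₃ p₂ := by
  have hd := h.nodup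
  obtain ⟨C, hC, hreach⟩ := hgood.exists_adj_incReach (A := p₀) (B := p₂)
    (by rintro rfl; simp at hd)
  rcases h.neighbors₀ C hC with rfl | rfl
  · obtain ⟨hlt₀, hreach⟩ := h.reenter hsymm (by simp [Set.insert_subset_iff]) hreach
    obtain ⟨hlt₄, hreach⟩ := hreach.next hsymm (by rintro (rfl | rfl) <;> simp at hd)
      fun u hu => (h.neighbors₄ u hu).symm
    obtain ⟨hlt₃, -⟩ := hreach.next hsymm (by rintro (rfl | rfl) <;> simp at hd)
      fun u hu => (h.neighbors₃ u hu).symm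
    exact Or.inr ⟨hlt₀, hlt₄, hlt₃⟩
  · exact Or.inl (hreach.next hsymm (by rintro (rfl | rfl) <;> simp at hd) h.neighbors₁).1

theorem weight_order_two_zero (hgood : GoodGraph G w) :
    w p₂ p₁ < w p₁ p₀ ∨ w p₂ p₃ < w p₃ p₄ ∧ w p₃ p₄ < w p₄ r ∧ w p₄ r < w q p₀ := by
  have hd := h.nodup
  obtain ⟨C, hC, hreach⟩ := hgood.exists_adj_incReach (A := p₂) (B := p₀)
    (by rintro rfl; simp at hd)
  rcases h.neighbors₂ C hC with rfl | rfl
  · exact Or.inl (hreach.next hsymm (by rintro (rfl | rfl) <;> simp at hd)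
      fun u hu => (h.neighbors₁ u hu).symm).1
  · obtain ⟨hlt₃, hreach⟩ := hreach.next hsymm (by rintro (rfl | rfl) <;> simp at hd)
      h.neighbors₃
    obtain ⟨hlt₄, hreach⟩ := hreach.next hsymm (by rintro (rfl | rfl) <;> simp at hd)
      h.neighbors₄
    obtain ⟨hlt₀, -⟩ := h.reverse.reenter hsymm (by simp [Set.insert_subset_iff]) hreach
    exact Or.inr ⟨hlt₃, hlt₄, hlt₀⟩

theorem weight_order_one_three (hgood : GoodGraph G w) :
    w p₁ p₀ < w p₀ q ∧ w p₀ q < w r p₄ ∧ w r p₄ < w p₄ p₃ ∨ w p₁ p₂ < w p₂ p₃ := by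
  have hd := h.nodup
  obtain ⟨C, hC, hreach⟩ := hgood.exists_adj_incReach (A := p₁) (B := p₃)
    (by rintro rfl; simp at hd)
  rcases h.neighbors₁ C hC with rfl | rfl
  · obtain ⟨hlt₀, hreach⟩ := hreach.next hsymm (by rintro (rfl | rfl) <;> simp at hd)
      fun u hu => (h.neighbors₀ u hu).symm
    obtain ⟨hltq, hreach⟩ := h.reenter hsymm (by simp [Set.insert_subset_iff]) hreach
    obtain ⟨hlt₄, -⟩ := hreach.next hsymm (by rintro (rfl | rfl) <;> simp at hd)
      fun u hu => (h.neighbors₄ u hu).symm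
    exact Or.inl ⟨hlt₀, hltq, hlt₄⟩
  · exact Or.inr (hreach.next hsymm (by rintro (rfl | rfl) <;> simp at hd) h.neighbors₂).1

theorem not_goodGraph : ¬GoodGraph G w := fun hgood => by
  have h02 := h.weight_order_zero_two hsymm hgood
  have h20 := h.weight_order_two_zero hsymm hgood
  have h13 := h.weight_order_one_three hsymm hgood
  have h42 := h.reverse.weight_order_zero_two hsymm hgood
  have h24 := h.reverse.weight_order_two_zero hsymm hgood
  have h31 := h.reverse.weight_order_one_three hsymm hgood
  simp only [hsymm p₁ p₀, hsymm p₂ p₁, hsymm p₃ p₂, hsymm p₄ p₃, hsymm p₀ q, hsymm r p₄]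
    at h02 h20 h13 h42 h24 h31
  rcases h02 with h02 | h02 <;> rcases h20 with h20 | h20 <;> rcases h13 with h13 | h13 <;>
    rcases h42 with h42 | h42 <;> rcases h24 with h24 | h24 <;> rcases h31 with h31 | h31 <;>
    linarith

end IsFiveChain

theorem exists_isFiveChain [Fintype V] {G : SimpleGraph V} [DecidableRel G.Adj]
    {p : Fin 5 → V} (hinj : Function.Injective p) (hdeg : ∀ i, G.degree (p i) = 2)
    (hadj : ∀ i : Fin 4, G.Adj (p i.castSucc) (p i.succ))
    (hacyc : (G.induce {v | G.degree v = 2}).IsAcyclic) :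
    ∃ q r, IsFiveChain G q (p 0) (p 1) (p 2) (p 3) (p 4) r := by
  have hne : ∀ {i j}, i ≠ j → p i ≠ p j := hinj.ne
  have h01 : G.Adj (p 0) (p 1) := hadj 0
  have h12 : G.Adj (p 1) (p 2) := hadj 1
  have h23 : G.Adj (p 2) (p 3) := hadj 2
  have h34 : G.Adj (p 3) (p 4) := hadj 3
  have h04 : ¬G.Adj (p 0) (p 4) := G.not_adj_of_isAcyclic_induce hacyc hinj hdeg hadj
  have nbrs : ∀ i {x y}, G.Adj (p i) x → G.Adj (p i) y → x ≠ y →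
      ∀ z, G.Adj (p i) z → z = x ∨ z = y :=
    fun i _ _ hx hy hxy _ => G.eq_or_eq_of_degree_le_two (hdeg i).le hx hy hxy
  obtain ⟨q, hq, hq₁⟩ := G.exists_adj_ne_of_one_lt_degree (by rw [hdeg 0]; norm_num) (p 1)
  obtain ⟨r, hr, hr₃⟩ := G.exists_adj_ne_of_one_lt_degree (by rw [hdeg 4]; norm_num) (p 3)
  have N₀ := nbrs 0 hq h01 hq₁
  have N₁ := nbrs 1 h01.symm h12 (hne (by decide))
  have N₂ := nbrs 2 h12.symm h23 (hne (by decide))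
  have N₃ := nbrs 3 h23.symm h34 (hne (by decide))
  have N₄ := nbrs 4 h34.symm hr hr₃.symm
  refine ⟨q, r, List.nodup_ofFn.mpr hinj, ?_, ?_, N₀, N₁, N₂, N₃, N₄⟩
  · rintro (rfl | rfl | rfl | rfl | rfl)
    · exact G.irrefl hq
    · exact hq₁ rfl
    · rcases N₂ _ hq.symm with h | h <;> exact hne (by decide) h
    · rcases N₃ _ hq.symm with h | h <;> exact hne (by decide) h
    · exact h04 hq
  · rintro (rfl | rfl | rfl | rfl | rfl)
    · exact h04 hr.symm
    · rcases N₁ _ hr.symm with h | h <;> exact hne (by decide) h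
    · rcases N₂ _ hr.symm with h | h <;> exact hne (by decide) h
    · exact hr₃ rfl
    · exact G.irrefl hr

theorem good_graph_chain_at_most_four_general
    [Fintype V] (G : SimpleGraph V) [DecidableRel G.Adj] (w : V → V → ℝ)
    (hsymm : ∀ a b, w a b = w b a)
    (hgood : GoodGraph G w)
    (hacyc : (G.induce {v | G.degree v = 2}).IsAcyclic) :
    ¬∃ p : Fin 5 → V, Function.Injective p ∧ (∀ i, G.degree (p i) = 2) ∧
      ∀ i : Fin 4, G.Adj (p i.castSucc) (p i.succ) := by
  rintro ⟨p, hinj, hdeg, hadj⟩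
  obtain ⟨q, r, h⟩ := exists_isFiveChain hinj hdeg hadj hacyc
  exact h.not_goodGraph hsymm hgood

/-- In a good simple graph with distinct edge weights whose degree-2 vertices induce no
cycle, every chain of degree-2 vertices has at most 4 vertices: there is no path of 5
distinct degree-2 vertices. -/
theorem good_graph_chain_at_most_four
    [Fintype V] (G : SimpleGraph V) [DecidableRel G.Adj] (w : V → V → ℝ)
    (hsymm : ∀ a b, w a b = w b a)
    (hdist : ∀ a b c d, G.Adj a b → G.Adj c d → w a b = w c d →
      (a = c ∧ b = d) ∨ (a = d ∧ b = c))
    (hgood : GoodGraph G w)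
    (hacyc : (G.induce {v | G.degree v = 2}).IsAcyclic) :
    ¬∃ p : Fin 5 → V, Function.Injective p ∧ (∀ i, G.degree (p i) = 2) ∧
      ∀ i : Fin 4, G.Adj (p i.castSucc) (p i.succ) :=
  good_graph_chain_at_most_four_general G w hsymm hgood hacyc
end

section
/- A cycle graph on n ≥ 4 vertices with distinct edge weights is not a good graph: there exist two non-adjacent vertices A, B such that no path between them consists entirely of edges useful with respect to {A,B}. -/
variable {V : Type}

/-- The cycle graph on `Fin n`: `i` is adjacent to `i ± 1` (mod n). -/
def cycleG (n : ℕ) : SimpleGraph (Fin n) :=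
  SimpleGraph.fromRel (fun i j => (j : ℕ) = ((i : ℕ) + 1) % n)

/-!
Take `A = 0` and `B = 2`. On each of the two arcs of the cycle between them, the edge of maximal
weight is not useful: an increasing path that crosses it towards the interior of the arc arrives
at a vertex of degree two whose other edge is no heavier, so it cannot continue to `A` or `B`.
But every path from `0` to `2` has to cross one of these two edges.
-/

section Useful

variable {G : SimpleGraph V} {w : V → V → ℝ} {A B C D : V}

theorem Useful.symm (h : Useful G w A B C D) : Useful G w A B D C := ⟨h.2, h.1⟩

theorem Useful.adj (h : Useful G w A B C D) : G.Adj C D := by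
  obtain ⟨_, ⟨hadj, -⟩, -⟩ := h.1
  exact (List.isChain_cons_cons.mp hadj).1

theorem Useful.exists_adj_lt (h : Useful G w A B C D) (hA : D ≠ A) (hB : D ≠ B) :
    ∃ x, G.Adj D x ∧ w C D < w D x := by
  obtain ⟨l, ⟨hadj, hinc⟩, hlast⟩ := h.1
  match l, hadj, hinc, hlast with
  | [], _, _, hlast => simp_all
  | x :: _, hadj, hinc, _ =>
    exact ⟨x, (List.isChain_cons_cons.mp hadj).2.rel, (List.isChain_cons_cons.mp hinc).1⟩

/-- The witness is the edge of maximal weight on the arc `f 0, …, f m`: an increasing path crossing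
it gets stuck at its interior endpoint, whose other edge is no heavier. -/
theorem exists_not_useful_of_arc (hsymm : ∀ a b, w a b = w b a) (f : ℕ → V) {m : ℕ}
    (hm : 2 ≤ m) (hAB : ∀ k, k + 1 < m → f (k + 1) ≠ A ∧ f (k + 1) ≠ B)
    (hnbr : ∀ k, k + 1 < m → ∀ x, G.Adj (f (k + 1)) x → x = f k ∨ x = f (k + 2)) :
    ∃ k < m, ¬Useful G w A B (f k) (f (k + 1)) := by
  obtain ⟨k, hk, hmax⟩ := Finset.exists_max_image (Finset.range m)
    (fun k => w (f k) (f (k + 1))) ⟨0, Finset.mem_range.2 (by omega)⟩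
  have hmax' : ∀ i, i < m → w (f i) (f (i + 1)) ≤ w (f k) (f (k + 1)) :=
    fun i hi => hmax i (Finset.mem_range.2 hi)
  refine ⟨k, Finset.mem_range.1 hk, fun hU => ?_⟩
  by_cases hk1 : k + 1 < m
  · obtain ⟨x, hx, hlt⟩ := hU.exists_adj_lt (hAB k hk1).1 (hAB k hk1).2
    rcases hnbr k hk1 x hx with rfl | rfl
    · exact (hsymm (f k) _ ▸ hlt).false
    · exact (hmax' (k + 1) hk1).not_gt hlt
  · obtain ⟨j, rfl⟩ : ∃ j, k = j + 1 := ⟨k - 1, by omega⟩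
    have hj : j + 1 < m := by have := Finset.mem_range.1 hk; omega
    obtain ⟨x, hx, hlt⟩ := hU.symm.exists_adj_lt (hAB j hj).1 (hAB j hj).2
    rcases hnbr j hj x hx with rfl | rfl
    · rw [hsymm (f (j + 1)), hsymm (f (j + 1 + 1))] at hlt
      exact (hmax' j (by omega)).not_gt hlt
    · exact (hsymm (f (j + 2)) _ ▸ hlt).false

end Useful

theorem List.exists_mem_zip_of_not_getLast {α : Type*} (P : α → Prop) (a : α) (l : List α)
    (ha : P a) (hlast : ¬P ((a :: l).getLast (List.cons_ne_nil a l))) :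
    ∃ p ∈ (a :: l).zip l, P p.1 ∧ ¬P p.2 := by
  induction l generalizing a with
  | nil => exact absurd ha hlast
  | cons x t ih =>
    by_cases hx : P x
    · obtain ⟨p, hp, h⟩ := ih x hx (by rwa [List.getLast_cons (List.cons_ne_nil x t)] at hlast)
      exact ⟨p, List.mem_cons_of_mem _ hp, h⟩
    · exact ⟨(a, x), List.mem_cons_self .., ha, hx⟩

section Cycle

open Fin.NatCast Fin.CommRing

variable {n : ℕ}

theorem Fin.natCast_ne_natCast_of_lt [NeZero n] {a b : ℕ} (ha : a < n) (hb : b < n)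
    (hab : a ≠ b) : (a : Fin n) ≠ b :=
  fun h => hab (by rw [← Fin.val_cast_of_lt ha, ← Fin.val_cast_of_lt hb, h])

theorem cycleG_adj_val {i j : Fin n} (h : (cycleG n).Adj i j) :
    (j : ℕ) = i + 1 ∨ (i : ℕ) = j + 1 ∨ ((j : ℕ) = 0 ∧ (i : ℕ) + 1 = n) ∨
      ((i : ℕ) = 0 ∧ (j : ℕ) + 1 = n) := by
  have hi := i.isLt
  have hj := j.isLt
  have mod_succ : ∀ a < n, (a + 1) % n = if a + 1 = n then 0 else a + 1 := by
    intro a ha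
    split_ifs with h
    · rw [h, Nat.mod_self]
    · exact Nat.mod_eq_of_lt (by omega)
  rcases (SimpleGraph.fromRel_adj _ i j).1 h with ⟨-, h | h⟩
  · rw [mod_succ i hi] at h
    split_ifs at h <;> omega
  · rw [mod_succ j hj] at h
    split_ifs at h <;> omega

theorem cycleG_adj_eq_add_one [NeZero n] {i j : Fin n} (h : (cycleG n).Adj i j) :
    j = i + 1 ∨ i = j + 1 := by
  rcases (SimpleGraph.fromRel_adj _ i j).1 h with ⟨-, h | h⟩
  · exact Or.inl (Fin.ext (by rw [h, Fin.val_add, Fin.val_one', Nat.add_mod_mod]))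
  · exact Or.inr (Fin.ext (by rw [h, Fin.val_add, Fin.val_one', Nat.add_mod_mod]))

theorem cycleG_adj_natCast_succ [NeZero n] {k : ℕ} {x : Fin n}
    (h : (cycleG n).Adj ((k + 1 : ℕ) : Fin n) x) : x = k ∨ x = ((k + 2 : ℕ) : Fin n) := by
  rcases cycleG_adj_eq_add_one h with rfl | h
  · exact Or.inr (by push_cast; ring)
  · exact Or.inl (by rw [eq_sub_of_add_eq h.symm]; push_cast; ring)

theorem cycleG_cut [NeZero n] {i j : ℕ} (hij : i < j) (hjn : j < n) {u v : Fin n}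
    (huv : (cycleG n).Adj u v) (hu : (u : ℕ) ≤ i ∨ j < u) (hv : ¬((v : ℕ) ≤ i ∨ j < v)) :
    (u = i ∧ v = ((i + 1 : ℕ) : Fin n)) ∨ (v = j ∧ u = ((j + 1 : ℕ) : Fin n)) := by
  have hj1 : (((j + 1 : ℕ) : Fin n) : ℕ) = if j + 1 = n then 0 else j + 1 := by
    split_ifs with h
    · rw [Fin.val_natCast, h, Nat.mod_self]
    · exact Fin.val_cast_of_lt (by omega)
  simp only [Fin.ext_iff, Fin.val_cast_of_lt (hij.trans hjn), Fin.val_cast_of_lt hjn,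
    Fin.val_cast_of_lt (show i + 1 < n by omega), hj1]
  split_ifs <;> rcases cycleG_adj_val huv with h | h | h | h <;> omega

end Cycle

/-- A cycle graph on at least 4 vertices with distinct edge weights is not good: some two
non-adjacent vertices are joined by no path of useful edges. -/
theorem cycle_graph_not_good (n : ℕ) (hn : 4 ≤ n) (w : Fin n → Fin n → ℝ)
    (hsymm : ∀ a b, w a b = w b a) :
    ∃ A B : Fin n, A ≠ B ∧ ¬(cycleG n).Adj A B ∧
      ¬∃ l : List (Fin n),
        List.Chain' (cycleG n).Adj (A :: l) ∧ (A :: l).getLast (by simp) = B ∧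
        ∀ p ∈ (A :: l).zip l, Useful (cycleG n) w A B p.1 p.2 := by
  have : NeZero n := ⟨by omega⟩
  open Fin.NatCast in
  have hval (k : ℕ) (hk : k < n) : ((k : Fin n) : ℕ) = k := Fin.val_cast_of_lt hk
  have hAB (a : ℕ) (ha : a < n) (ha0 : a ≠ 0) (ha2 : a ≠ 2) :
      (a : Fin n) ≠ (0 : ℕ) ∧ (a : Fin n) ≠ (2 : ℕ) :=
    ⟨Fin.natCast_ne_natCast_of_lt ha (by omega) ha0,
      Fin.natCast_ne_natCast_of_lt ha (by omega) ha2⟩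
  obtain ⟨i, hi, hi_not⟩ := exists_not_useful_of_arc (G := cycleG n) hsymm (fun k => (k : Fin n))
    le_rfl (fun k hk => hAB (k + 1) (by omega) (by omega) (by omega))
    (fun _ _ _ hx => cycleG_adj_natCast_succ hx)
  obtain ⟨j, hj, hj_not⟩ := exists_not_useful_of_arc (G := cycleG n) hsymm
    (fun k => ((k + 2 : ℕ) : Fin n)) (m := n - 2) (by omega)
    (fun k hk => hAB (k + 1 + 2) (by omega) (by omega) (by omega))
    (fun k _ _ hx => cycleG_adj_natCast_succ (k := k + 2) hx)
  refine ⟨(0 : ℕ), (2 : ℕ), Fin.natCast_ne_natCast_of_lt (by omega) (by omega) (by omega),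
    fun hadj => ?_, ?_⟩
  · have := cycleG_adj_val hadj
    rw [hval 0 (by omega), hval 2 (by omega)] at this
    omega
  rintro ⟨l, -, hlast, huse⟩
  obtain ⟨p, hp, hp_in, hp_out⟩ := List.exists_mem_zip_of_not_getLast
    (fun v : Fin n => (v : ℕ) ≤ i ∨ j + 2 < v) _ l
    (Or.inl ((hval 0 (by omega)).trans_le i.zero_le)) (by rw [hlast, hval 2 (by omega)]; omega)
  rcases cycleG_cut (by omega) (by omega) (huse p hp).adj hp_in hp_out with ⟨h1, h2⟩ | ⟨h2, h1⟩
  · exact hi_not (h1 ▸ h2 ▸ huse p hp)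
  · exact hj_not (h2 ▸ h1 ▸ (huse p hp).symm)
end
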